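/- arXiv:1101.6069 — 2 statements merged into one kernel-verified Lean document; each statement's English description precedes it below -/
import Mathlib

section
/- Assume hypotheses (H1) and (H2). Then the set of metastable configurations X_meta = {η ∈ X ∖ X_stab : V_η = max_{ξ ∈ X∖X_stab} V_ξ} equals {□}, and the maximal stability level Γ = max_{ξ ∈ X∖X_stab} V_ξ equals Γ*. -/
/-!
Below the level of □, every state other than ⊞ can escape to a lower state within height V*
above itself; chaining these escapes joins any such state ξ to ⊞ below H ξ + max V* 0, which is
strictly below Φ(□,⊞) because V* < Γ*. By the ultrametric inequality
Φ(□,⊞) ≤ max (Φ(□,ξ)) (Φ(ξ,⊞)), reaching any state below □ from □ therefore costs Φ(□,⊞), so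
V_□ = Γ*, while every other unstable state has stability level at most V* < Γ*.
-/

open scoped Classical

variable {X : Type*}

/-- `ω` (restricted to 0,…,L) is a path of allowed moves from `a` to `b`. -/
def IsPathW (rel : X → X → Prop) (a b : X) (L : ℕ) (ω : ℕ → X) : Prop :=
  ω 0 = a ∧ ω L = b ∧ ∀ i < L, rel (ω i) (ω (i + 1))

/-- The maximal energy along the path `ω = (ω 0, …, ω L)`. -/
noncomputable def pathMax (H : X → ℝ) (L : ℕ) (ω : ℕ → X) : ℝ :=
  (Finset.range (L + 1)).sup' ⟨0, Finset.mem_range.mpr (Nat.succ_pos L)⟩ fun i => H (ω i)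

/-- Communication height Φ(a,b) between two configurations. -/
noncomputable def commH (rel : X → X → Prop) (H : X → ℝ) (a b : X) : ℝ :=
  sInf { m : ℝ | ∃ L ω, IsPathW rel a b L ω ∧ m = pathMax H L ω }

/-- Communication height Φ(A,B) between two sets of configurations. -/
noncomputable def commHS (rel : X → X → Prop) (H : X → ℝ) (A B : Set X) : ℝ :=
  sInf { m : ℝ | ∃ a ∈ A, ∃ b ∈ B, m = commH rel H a b }

/-- The graph (X,∼) is connected. -/
def ConnGraph (rel : X → X → Prop) : Prop :=
  ∀ a b : X, ∃ L ω, IsPathW rel a b L ω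

/-- The stability level V_η ∈ (−∞,∞], equal to Φ(η,I_η) − H(η) if
I_η = {ξ : H(ξ) < H(η)} is nonempty and +∞ otherwise. -/
noncomputable def Vlev (rel : X → X → Prop) (H : X → ℝ) (η : X) : EReal :=
  if ({ξ : X | H ξ < H η}).Nonempty then
    ((commHS rel H {η} {ξ : X | H ξ < H η} - H η : ℝ) : EReal)
  else ⊤

section Paths

variable {rel : X → X → Prop} {H : X → ℝ}

lemma le_pathMax (H : X → ℝ) (ω : ℕ → X) {L i : ℕ} (hi : i ≤ L) : H (ω i) ≤ pathMax H L ω :=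
  Finset.le_sup' (fun i => H (ω i)) (Finset.mem_range.2 (Nat.lt_succ_of_le hi))

lemma pathMax_le {c : ℝ} {L : ℕ} {ω : ℕ → X} (h : ∀ i ≤ L, H (ω i) ≤ c) : pathMax H L ω ≤ c :=
  Finset.sup'_le _ _ fun i hi => h i (Nat.lt_succ_iff.1 (Finset.mem_range.1 hi))

def pathAppend (L₁ : ℕ) (ω₁ ω₂ : ℕ → X) : ℕ → X :=
  fun i => if i ≤ L₁ then ω₁ i else ω₂ (i - L₁)

lemma pathAppend_of_le {L₁ i : ℕ} {ω₁ ω₂ : ℕ → X} (hjoin : ω₁ L₁ = ω₂ 0) (hi : L₁ ≤ i) :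
    pathAppend L₁ ω₁ ω₂ i = ω₂ (i - L₁) := by
  unfold pathAppend
  split_ifs with h
  · obtain rfl : i = L₁ := le_antisymm h hi
    simpa using hjoin
  · rfl

lemma IsPathW.append {a b c : X} {L₁ L₂ : ℕ} {ω₁ ω₂ : ℕ → X} (h₁ : IsPathW rel a b L₁ ω₁)
    (h₂ : IsPathW rel b c L₂ ω₂) : IsPathW rel a c (L₁ + L₂) (pathAppend L₁ ω₁ ω₂) := by
  have hjoin : ω₁ L₁ = ω₂ 0 := h₁.2.1.trans h₂.1.symm
  refine ⟨by simp [pathAppend, h₁.1], ?_, fun i hi => ?_⟩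
  · rw [pathAppend_of_le hjoin (Nat.le_add_right _ _), Nat.add_sub_cancel_left, h₂.2.1]
  · rcases lt_or_ge i L₁ with hi₁ | hi₁
    · simpa [pathAppend, hi₁.le, Nat.succ_le_of_lt hi₁] using h₁.2.2 i hi₁
    · rw [pathAppend_of_le hjoin hi₁, pathAppend_of_le hjoin (by omega), Nat.sub_add_comm hi₁]
      exact h₂.2.2 _ (by omega)

lemma pathMax_append_le (L₁ L₂ : ℕ) (ω₁ ω₂ : ℕ → X) :
    pathMax H (L₁ + L₂) (pathAppend L₁ ω₁ ω₂) ≤ max (pathMax H L₁ ω₁) (pathMax H L₂ ω₂) := by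
  refine pathMax_le fun i hi => ?_
  unfold pathAppend
  split_ifs with h
  · exact (le_pathMax H ω₁ h).trans (le_max_left _ _)
  · exact (le_pathMax H ω₂ (by omega)).trans (le_max_right _ _)

lemma commHS_singleton_eq (η : X) (A : Set X) :
    commHS rel H {η} A = sInf ((commH rel H η) '' A) := by
  unfold commHS
  congr 1
  ext m
  simp [eq_comm]

end Paths

section CommunicationHeight

variable [Fintype X] {rel : X → X → Prop} {H : X → ℝ}

lemma finite_pathMax (rel : X → X → Prop) (H : X → ℝ) (a b : X) :
    {m : ℝ | ∃ L ω, IsPathW rel a b L ω ∧ m = pathMax H L ω}.Finite := by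
  refine (Set.finite_range H).subset ?_
  rintro _ ⟨L, ω, -, rfl⟩
  obtain ⟨i, -, hi⟩ := Finset.exists_mem_eq_sup' Finset.nonempty_range_add_one fun i => H (ω i)
  exact ⟨ω i, hi.symm⟩

lemma commH_le_pathMax {a b : X} {L : ℕ} {ω : ℕ → X} (h : IsPathW rel a b L ω) :
    commH rel H a b ≤ pathMax H L ω :=
  csInf_le (finite_pathMax rel H a b).bddBelow ⟨L, ω, h, rfl⟩

lemma exists_path_commH_eq (hconn : ConnGraph rel) (a b : X) :
    ∃ L ω, IsPathW rel a b L ω ∧ commH rel H a b = pathMax H L ω := by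
  obtain ⟨L, ω, h⟩ := hconn a b
  exact Set.Nonempty.csInf_mem (s := {m : ℝ | ∃ L ω, IsPathW rel a b L ω ∧ m = pathMax H L ω})
    ⟨_, L, ω, h, rfl⟩ (finite_pathMax rel H a b)

lemma le_commH_left (hconn : ConnGraph rel) (a b : X) : H a ≤ commH rel H a b := by
  obtain ⟨L, ω, h, heq⟩ := exists_path_commH_eq (H := H) hconn a b
  simpa [heq, h.1] using le_pathMax H ω (Nat.zero_le L)

lemma commH_self_le (a : X) : commH rel H a a ≤ H a := by
  have h : IsPathW rel a a 0 fun _ => a := ⟨rfl, rfl, fun i hi => absurd hi (Nat.not_lt_zero i)⟩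
  simpa [pathMax] using commH_le_pathMax (H := H) h

lemma commH_le_max (hconn : ConnGraph rel) (a b c : X) :
    commH rel H a c ≤ max (commH rel H a b) (commH rel H b c) := by
  obtain ⟨L₁, ω₁, h₁, he₁⟩ := exists_path_commH_eq (H := H) hconn a b
  obtain ⟨L₂, ω₂, h₂, he₂⟩ := exists_path_commH_eq (H := H) hconn b c
  rw [he₁, he₂]
  exact (commH_le_pathMax (h₁.append h₂)).trans (pathMax_append_le L₁ L₂ ω₁ ω₂)

lemma commHS_singleton_le (η : X) {A : Set X} {b : X} (hb : b ∈ A) :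
    commHS rel H {η} A ≤ commH rel H η b := by
  rw [commHS_singleton_eq]
  exact csInf_le (A.toFinite.image _).bddBelow ⟨b, hb, rfl⟩

lemma exists_commHS_singleton_eq (η : X) {A : Set X} (hA : A.Nonempty) :
    ∃ b ∈ A, commH rel H η b = commHS rel H {η} A := by
  rw [commHS_singleton_eq]
  exact (hA.image _).csInf_mem (A.toFinite.image _)

end CommunicationHeight

section Descent

variable [Fintype X] {rel : X → X → Prop} {H : X → ℝ}

lemma commH_le_add_max_of_descent (hconn : ConnGraph rel) {c V : ℝ} {m : X}
    (hdesc : ∀ ξ, H ξ < c → ξ ≠ m → {ξ' | H ξ' < H ξ}.Nonempty ∧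
      commHS rel H {ξ} {ξ' | H ξ' < H ξ} - H ξ ≤ V) (ξ : X) (hξ : H ξ < c) :
    commH rel H ξ m ≤ H ξ + max V 0 := by
  induction ξ using (Finite.wellFounded_of_trans_of_irrefl (InvImage (· < ·) H)).induction with
  | _ ξ ih =>
  by_cases hm : ξ = m
  · subst hm
    linarith [commH_self_le (rel := rel) (H := H) ξ, le_max_right V 0]
  obtain ⟨hI, hle⟩ := hdesc ξ hξ hm
  obtain ⟨ξ', hlt, heq⟩ := exists_commHS_singleton_eq (rel := rel) (H := H) ξ hI
  have hlt : H ξ' < H ξ := hlt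
  calc commH rel H ξ m ≤ max (commH rel H ξ ξ') (commH rel H ξ' m) := commH_le_max hconn _ _ _
    _ ≤ H ξ + max V 0 :=
      max_le (by linarith [le_max_left V 0]) ((ih ξ' hlt (hlt.trans hξ)).trans (by linarith))

lemma commHS_lowerSet_eq_commH (hconn : ConnGraph rel) {sq bx : X} (hbx : H bx < H sq) {V : ℝ}
    (hV : V < commH rel H sq bx - H sq)
    (hdesc : ∀ ξ, H ξ < H sq → ξ ≠ bx → {ξ' | H ξ' < H ξ}.Nonempty ∧
      commHS rel H {ξ} {ξ' | H ξ' < H ξ} - H ξ ≤ V) :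
    commHS rel H {sq} {ξ | H ξ < H sq} = commH rel H sq bx := by
  refine le_antisymm (commHS_singleton_le sq hbx) ?_
  obtain ⟨b, hb, heq⟩ :=
    exists_commHS_singleton_eq (rel := rel) (H := H) (A := {ξ | H ξ < H sq}) sq ⟨bx, hbx⟩
  have hb : H b < H sq := hb
  have hdescend : commH rel H b bx < commH rel H sq bx := by
    refine (commH_le_add_max_of_descent hconn hdesc b hb).trans_lt ?_
    rw [add_max]
    exact max_lt (by linarith) (by linarith [le_commH_left (rel := rel) (H := H) hconn sq bx])
  rw [← heq]
  exact ((le_max_iff.1 (commH_le_max hconn sq b bx)).resolve_right hdescend.not_ge)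

end Descent

lemma Vlev_of_nonempty {rel : X → X → Prop} {H : X → ℝ} {η : X} (h : {ξ | H ξ < H η}.Nonempty) :
    Vlev rel H η = ((commHS rel H {η} {ξ | H ξ < H η} - H η : ℝ) : EReal) :=
  if_pos h

lemma lt_of_setOf_isMin_eq_singleton {H : X → ℝ} {m a : X}
    (hmin : {η : X | ∀ ξ, H η ≤ H ξ} = {m}) (ha : a ≠ m) : H m < H a := by
  have hm : ∀ ξ, H m ≤ H ξ := (hmin ▸ rfl : m ∈ {η : X | ∀ ξ, H η ≤ H ξ})
  have ha : a ∉ {η : X | ∀ ξ, H η ≤ H ξ} := by rw [hmin]; exact ha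
  obtain ⟨ξ, hξ⟩ := not_forall.1 ha
  exact (hm ξ).trans_lt (not_le.1 hξ)

lemma setOf_forall_le_eq_singleton {α β : Type*} [LinearOrder β] {S : Set α} {f : α → β} {a : α}
    (ha : a ∈ S) (hlt : ∀ ζ ∈ S, ζ ≠ a → f ζ < f a) :
    {η | η ∈ S ∧ ∀ ζ ∈ S, f ζ ≤ f η} = {a} := by
  ext η
  refine ⟨fun ⟨hη, hmax⟩ => by_contra fun hne => (hlt η hη hne).not_ge (hmax a ha), ?_⟩
  rintro rfl
  refine ⟨ha, fun ζ hζ => ?_⟩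
  rcases eq_or_ne ζ η with rfl | hne
  exacts [le_rfl, (hlt ζ hζ hne).le]

theorem stmt_10_general [Fintype X] (rel : X → X → Prop) (H : X → ℝ)
    (hconn : ConnGraph rel)
    (sq bx : X) (hne : sq ≠ bx)
    -- (H1): X_stab = {⊞}
    (hH1 : {η : X | ∀ ξ, H η ≤ H ξ} = {bx})
    -- (H2): ∃ V* < Γ* with V_η ≤ V* for all η ∉ {□,⊞}
    (hH2 : ∃ Vs : ℝ, Vs < commH rel H sq bx - H sq ∧
      ∀ η : X, η ≠ sq → η ≠ bx →
        ({ξ : X | H ξ < H η}).Nonempty ∧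
        commHS rel H {η} {ξ : X | H ξ < H η} - H η ≤ Vs) :
    -- X_meta = {□}
    {η : X | η ∉ {σ : X | ∀ ξ, H σ ≤ H ξ} ∧
      ∀ ζ ∉ {σ : X | ∀ ξ, H σ ≤ H ξ}, Vlev rel H ζ ≤ Vlev rel H η} = {sq} ∧
    -- Γ = max over X ∖ X_stab of V equals Γ*
    sSup (Vlev rel H '' {σ : X | ∀ ξ, H σ ≤ H ξ}ᶜ)
      = ((commH rel H sq bx - H sq : ℝ) : EReal) := by
  obtain ⟨Vs, hVs, hlevel⟩ := hH2
  have hunstable : ∀ σ, σ ∈ {σ : X | ∀ ξ, H σ ≤ H ξ}ᶜ ↔ σ ≠ bx := fun σ => by rw [hH1]; rfl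
  have hbx : H bx < H sq := lt_of_setOf_isMin_eq_singleton hH1 hne
  have hVsq : Vlev rel H sq = ((commH rel H sq bx - H sq : ℝ) : EReal) := by
    rw [Vlev_of_nonempty ⟨bx, hbx⟩, commHS_lowerSet_eq_commH hconn hbx hVs
      fun ξ hξ hξbx => hlevel ξ (ne_of_apply_ne H hξ.ne) hξbx]
  have hlt : ∀ ζ ∈ {σ : X | ∀ ξ, H σ ≤ H ξ}ᶜ, ζ ≠ sq → Vlev rel H ζ < Vlev rel H sq := by
    intro ζ hζ hζsq
    obtain ⟨hI, hle⟩ := hlevel ζ hζsq ((hunstable ζ).1 hζ)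
    rw [hVsq, Vlev_of_nonempty hI]
    exact_mod_cast hle.trans_lt hVs
  have hsq := (hunstable sq).2 hne
  refine ⟨setOf_forall_le_eq_singleton hsq hlt, hVsq ▸ IsGreatest.csSup_eq ⟨⟨sq, hsq, rfl⟩, ?_⟩⟩
  rintro _ ⟨ζ, hζ, rfl⟩
  rcases eq_or_ne ζ sq with rfl | hζsq
  exacts [le_rfl, (hlt ζ hζ hζsq).le]

/-- under (H1)–(H2), X_meta = {□} and Γ = Γ*. -/
theorem stmt_10 [Fintype X] (rel : X → X → Prop) (H : X → ℝ)
    (hsymm : Symmetric rel) (hconn : ConnGraph rel)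
    (sq bx : X) (hne : sq ≠ bx) (Hsq : H sq = 0)
    -- (H1): X_stab = {⊞}
    (hH1 : {η : X | ∀ ξ, H η ≤ H ξ} = {bx})
    -- (H2): ∃ V* < Γ* with V_η ≤ V* for all η ∉ {□,⊞}
    (hH2 : ∃ Vs : ℝ, Vs < commH rel H sq bx - H sq ∧
      ∀ η : X, η ≠ sq → η ≠ bx →
        ({ξ : X | H ξ < H η}).Nonempty ∧
        commHS rel H {η} {ξ : X | H ξ < H η} - H η ≤ Vs) :
    -- X_meta = {□}
    {η : X | η ∉ {σ : X | ∀ ξ, H σ ≤ H ξ} ∧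
      ∀ ζ ∉ {σ : X | ∀ ξ, H σ ≤ H ξ}, Vlev rel H ζ ≤ Vlev rel H η} = {sq} ∧
    -- Γ = max over X ∖ X_stab of V equals Γ*
    sSup (Vlev rel H '' {σ : X | ∀ ξ, H σ ≤ H ξ}ᶜ)
      = ((commH rel H sq bx - H sq : ℝ) : EReal) :=
  stmt_10_general rel H hconn sq bx hne hH1 hH2
end

section
/- Let A, B ⊆ X be disjoint and nonempty, and set K(A,B) = {η ∈ X : Φ(η,A) ≤ Φ(η,B)}. If η ∈ K(A,B), η' ∈ X ∖ K(A,B) and η ∼ η', then (1) H(η') < H(η), and (2) H(η) ≥ Φ(A,B). -/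
/-!
`Φ(a,b) ≤ t` says exactly that `a` and `b` are joined inside the sublevel set
`{H ≤ t}`. Hence if `η ∼ η'` and both lie below `t`, then `Φ(η,C) ≤ t ↔ Φ(η',C) ≤ t` for every
`C`. Taking `t = Φ(η',B)`, the assumption `H η ≤ t` would transport `η' ∉ K(A,B)` into
`η ∉ K(A,B)`; so `H η' ≤ Φ(η',B) < H η`. Then at level `t = H η` both `A` and `B` are reachable
from `η`, which bounds `Φ(A,B)`. -/

open scoped Classical

variable {X : Type*}

open Relation

lemma Set.Finite.csInf_le_iff {α : Type*} [ConditionallyCompleteLinearOrder α] {s : Set α}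
    (hs : s.Finite) (hne : s.Nonempty) {t : α} :
    sInf s ≤ t ↔ ∃ m ∈ s, m ≤ t :=
  ⟨fun h => ⟨sInf s, hne.csInf_mem hs, h⟩,
    fun ⟨_, hm, hmt⟩ => (csInf_le hs.bddBelow hm).trans hmt⟩

def SublevelAdj (rel : X → X → Prop) (H : X → ℝ) (t : ℝ) (x y : X) : Prop :=
  rel x y ∧ H x ≤ t ∧ H y ≤ t

section Paths

variable (rel : X → X → Prop) (H : X → ℝ)

lemma pathMax_le_iff {L : ℕ} {ω : ℕ → X} {t : ℝ} :
    pathMax H L ω ≤ t ↔ ∀ i ≤ L, H (ω i) ≤ t := by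
  simp only [pathMax, Finset.sup'_le_iff (H := Finset.nonempty_range_add_one), Finset.mem_range,
    Nat.lt_add_one_iff]

lemma pathMax_mem_range (L : ℕ) (ω : ℕ → X) : pathMax H L ω ∈ Set.range H := by
  obtain ⟨i, -, h⟩ := Finset.exists_mem_eq_sup' (Finset.nonempty_range_add_one (n := L))
    (fun i => H (ω i))
  exact ⟨ω i, h.symm⟩

lemma reflTransGen_sublevelAdj_of_isPathW {a b : X} {L : ℕ} {ω : ℕ → X} {t : ℝ}
    (hω : IsPathW rel a b L ω) (ht : pathMax H L ω ≤ t) :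
    ReflTransGen (SublevelAdj rel H t) a b := by
  obtain ⟨rfl, rfl, hstep⟩ := hω
  rw [pathMax_le_iff] at ht
  refine (reflTransGen_of_succ_of_le (fun i j => SublevelAdj rel H t (ω i) (ω j))
    (fun i hi => ?_) (Nat.zero_le L)).lift ω fun _ _ => id
  have hi : i < L := hi.2
  exact ⟨hstep i hi, ht i hi.le, ht (i + 1) hi⟩

lemma exists_isPathW_of_reflTransGen {a b : X} {t : ℝ}
    (h : ReflTransGen (SublevelAdj rel H t) a b) (ha : H a ≤ t) :
    ∃ L ω, IsPathW rel a b L ω ∧ pathMax H L ω ≤ t := by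
  induction h using ReflTransGen.head_induction_on with
  | refl => exact ⟨0, fun _ => b, ⟨rfl, rfl, by simp⟩, by simpa [pathMax_le_iff] using ha⟩
  | @head a c hac _ ih =>
    obtain ⟨L, ω, ⟨rfl, rfl, hstep⟩, hmax⟩ := ih hac.2.2
    refine ⟨L + 1, fun | 0 => a | i + 1 => ω i, ⟨rfl, rfl, fun i hi => ?_⟩, ?_⟩
    · cases i with
      | zero => exact hac.1
      | succ i => exact hstep i (by omega)
    · rw [pathMax_le_iff] at hmax ⊢
      rintro (_ | i) hi
      · exact ha
      · exact hmax i (by omega)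

end Paths

section Heights

variable [Fintype X] (rel : X → X → Prop) (H : X → ℝ)

lemma commH_le_iff (hconn : ConnGraph rel) {a b : X} {t : ℝ} :
    commH rel H a b ≤ t ↔ H a ≤ t ∧ ReflTransGen (SublevelAdj rel H t) a b := by
  have hfin : { m : ℝ | ∃ L ω, IsPathW rel a b L ω ∧ m = pathMax H L ω }.Finite :=
    (Set.finite_range H).subset (by rintro _ ⟨L, ω, -, rfl⟩; exact pathMax_mem_range H L ω)
  obtain ⟨L, ω, hω⟩ := hconn a b
  rw [commH, hfin.csInf_le_iff ⟨_, L, ω, hω, rfl⟩]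
  constructor
  · rintro ⟨_, ⟨L, ω, hω, rfl⟩, ht⟩
    refine ⟨?_, reflTransGen_sublevelAdj_of_isPathW rel H hω ht⟩
    exact hω.1 ▸ (pathMax_le_iff H).1 ht 0 (Nat.zero_le L)
  · rintro ⟨ha, hab⟩
    obtain ⟨L, ω, hω, ht⟩ := exists_isPathW_of_reflTransGen rel H hab ha
    exact ⟨_, ⟨L, ω, hω, rfl⟩, ht⟩

lemma commHS_le_iff {A B : Set X} (hA : A.Nonempty) (hB : B.Nonempty) {t : ℝ} :
    commHS rel H A B ≤ t ↔ ∃ a ∈ A, ∃ b ∈ B, commH rel H a b ≤ t := by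
  have hfin : { m : ℝ | ∃ a ∈ A, ∃ b ∈ B, m = commH rel H a b }.Finite :=
    (Set.finite_range fun p : X × X => commH rel H p.1 p.2).subset
      (by rintro _ ⟨a, -, b, -, rfl⟩; exact ⟨(a, b), rfl⟩)
  obtain ⟨a, ha⟩ := hA
  obtain ⟨b, hb⟩ := hB
  rw [commHS, hfin.csInf_le_iff ⟨_, a, ha, b, hb, rfl⟩]
  constructor
  · rintro ⟨_, ⟨a, ha, b, hb, rfl⟩, ht⟩
    exact ⟨a, ha, b, hb, ht⟩
  · rintro ⟨a, ha, b, hb, ht⟩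
    exact ⟨_, ⟨a, ha, b, hb, rfl⟩, ht⟩

variable {rel} (hconn : ConnGraph rel) {C : Set X} (hC : C.Nonempty)
include hconn hC

lemma commHS_singleton_le_iff {σ : X} {t : ℝ} :
    commHS rel H {σ} C ≤ t ↔ H σ ≤ t ∧ ∃ c ∈ C, ReflTransGen (SublevelAdj rel H t) σ c := by
  simp only [commHS_le_iff rel H (Set.singleton_nonempty σ) hC, Set.mem_singleton_iff,
    exists_eq_left, commH_le_iff rel H hconn]
  exact ⟨fun ⟨c, hc, hσ, h⟩ => ⟨hσ, c, hc, h⟩, fun ⟨hσ, c, hc, h⟩ => ⟨c, hc, hσ, h⟩⟩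

lemma le_commHS_singleton (σ : X) : H σ ≤ commHS rel H {σ} C :=
  ((commHS_singleton_le_iff H hconn hC).1 le_rfl).1

lemma commHS_singleton_le_of_rel {η η' : X} {t : ℝ} (h : rel η' η) (hη' : H η' ≤ t)
    (hη : commHS rel H {η} C ≤ t) : commHS rel H {η'} C ≤ t := by
  obtain ⟨hηt, c, hc, hηc⟩ := (commHS_singleton_le_iff H hconn hC).1 hη
  exact (commHS_singleton_le_iff H hconn hC).2 ⟨hη', c, hc, hηc.head ⟨h, hη', hηt⟩⟩

end Heights

lemma commHS_le_max_commHS_singleton [Fintype X] {rel : X → X → Prop} (H : X → ℝ)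
    (hsymm : Symmetric rel) (hconn : ConnGraph rel) {A B : Set X} (hA : A.Nonempty)
    (hB : B.Nonempty) (σ : X) :
    commHS rel H A B ≤ max (commHS rel H {σ} A) (commHS rel H {σ} B) := by
  set t := max (commHS rel H {σ} A) (commHS rel H {σ} B)
  obtain ⟨hσ, a, ha, hσa⟩ := (commHS_singleton_le_iff H hconn hA).1 (le_max_left _ _)
  obtain ⟨-, b, hb, hσb⟩ := (commHS_singleton_le_iff H hconn hB).1 (le_max_right _ _)
  have haσ : ReflTransGen (SublevelAdj rel H t) a σ :=
    ReflTransGen.mono (fun _ _ h => ⟨hsymm h.1, h.2.2, h.2.1⟩) _ _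
      (reflTransGen_swap.2 hσa)
  have hat : H a ≤ t := by
    rcases haσ.cases_head with rfl | ⟨_, hac, -⟩
    exacts [hσ, hac.2.1]
  exact (commHS_le_iff rel H hA hB).2
    ⟨a, ha, b, hb, (commH_le_iff rel H hconn).2 ⟨hat, haσ.trans hσb⟩⟩

theorem stmt_12_general [Fintype X] (rel : X → X → Prop) (H : X → ℝ)
    (hsymm : Symmetric rel) (hconn : ConnGraph rel)
    (A B : Set X) (hA : A.Nonempty) (hB : B.Nonempty)
    (η η' : X)
    (hη : η ∈ {σ : X | commHS rel H {σ} A ≤ commHS rel H {σ} B})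
    (hη' : η' ∉ {σ : X | commHS rel H {σ} A ≤ commHS rel H {σ} B})
    (hrel : rel η η') :
    H η' < H η ∧ commHS rel H A B ≤ H η := by
  replace hη : commHS rel H {η} A ≤ commHS rel H {η} B := hη
  replace hη' : commHS rel H {η'} B < commHS rel H {η'} A := not_le.1 hη'
  have hη'B : H η' ≤ commHS rel H {η'} B := le_commHS_singleton H hconn hB η'
  have hη'B_lt : commHS rel H {η'} B < H η := by
    by_contra! hle
    have hηB := commHS_singleton_le_of_rel H hconn hB hrel hle le_rfl
    exact hη'.not_ge (commHS_singleton_le_of_rel H hconn hA (hsymm hrel) hη'B (hη.trans hηB))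
  have hηB : commHS rel H {η} B ≤ H η :=
    commHS_singleton_le_of_rel H hconn hB hrel le_rfl hη'B_lt.le
  exact ⟨hη'B.trans_lt hη'B_lt, (commHS_le_max_commHS_singleton H hsymm hconn hA hB η).trans
    (max_le (hη.trans hηB) hηB)⟩

/-- with K(A,B) = {η : Φ(η,A) ≤ Φ(η,B)}, if η ∈ K(A,B),
η' ∉ K(A,B) and η ∼ η', then H(η') < H(η) and H(η) ≥ Φ(A,B). -/
theorem stmt_12 [Fintype X] (rel : X → X → Prop) (H : X → ℝ)
    (hsymm : Symmetric rel) (hconn : ConnGraph rel)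
    (A B : Set X) (hA : A.Nonempty) (hB : B.Nonempty) (hAB : Disjoint A B)
    (η η' : X)
    (hη : η ∈ {σ : X | commHS rel H {σ} A ≤ commHS rel H {σ} B})
    (hη' : η' ∉ {σ : X | commHS rel H {σ} A ≤ commHS rel H {σ} B})
    (hrel : rel η η') :
    H η' < H η ∧ commHS rel H A B ≤ H η :=
  stmt_12_general rel H hsymm hconn A B hA hB η η' hη hη' hrel
end
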